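/- Let q_s -> q_0 strongly in L^m(Omega) and in W^{1,m} with uniformly bounded gradients; let q'_s(x) = sum over alpha in I_s of q_alpha^{(s)} * indicator(K'_s(alpha)), where q_alpha^{(s)} is the mean of q_s over K_s(alpha), the cubes K_s(alpha) = K(x_alpha, lambda_s rho_s) are pairwise disjoint with lambda_s rho_s -> 0, K'_s(alpha) = K(x_alpha, (lambda_s - 2) rho_s), and the measure of both U_s = Omega \ union of K_s(alpha) and of union over alpha of (K_s(alpha) \ K'_s(alpha)) tends to 0. Then q'_s converges to q_0 strongly in L^m(Omega). -/

import Mathlib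

open MeasureTheory Real Filter Topology

noncomputable section

abbrev En (n : ℕ) := EuclideanSpace ℝ (Fin n)

/-- The gradient of a real-valued function, as a vector in `En n`. -/
def egrad {n : ℕ} (v : En n → ℝ) (x : En n) : En n :=
  (WithLp.equiv 2 (Fin n → ℝ)).symm fun j => fderiv ℝ v x (EuclideanSpace.single j 1)

def cube {n : ℕ} (x₀ : En n) (r : ℝ) : Set (En n) := {x | ∀ j, |x j - x₀ j| ≤ r}

/-- The point of `En n` with coordinates `c * α j` for a multi-index `α`. -/
def gridPt {n : ℕ} (c : ℝ) (α : Fin n → ℤ) : En n :=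
  (WithLp.equiv 2 (Fin n → ℝ)).symm fun j => c * (α j : ℝ)


namespace Aux

def ocube {n : ℕ} (x₀ : En n) (r : ℝ) : Set (En n) := {x | ∀ j, |x j - x₀ j| < r}

variable {n : ℕ} (x₀ : En n) (r : ℝ)

lemma cube_eq : cube x₀ r = (MeasurableEquiv.toLp 2 (Fin n → ℝ)).symm ⁻¹'
    (Set.univ.pi fun j => Set.Icc (x₀ j - r) (x₀ j + r)) := by
  ext x
  simp only [cube, Set.mem_setOf_eq, Set.mem_preimage, Set.mem_pi, Set.mem_univ, true_implies,
    Set.mem_Icc, abs_sub_le_iff]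
  have he : ∀ (y : En n) j, (MeasurableEquiv.toLp 2 (Fin n → ℝ)).symm y j = y j := fun _ _ => rfl
  constructor
  · intro h j; rw [he]; constructor <;> linarith [(h j).1, (h j).2]
  · intro h j; have := h j; rw [he] at this; constructor <;> linarith [this.1, this.2]

lemma ocube_eq : ocube x₀ r = (MeasurableEquiv.toLp 2 (Fin n → ℝ)).symm ⁻¹'
    (Set.univ.pi fun j => Set.Ioo (x₀ j - r) (x₀ j + r)) := by
  ext x
  simp only [ocube, Set.mem_setOf_eq, Set.mem_preimage, Set.mem_pi, Set.mem_univ, true_implies,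
    Set.mem_Ioo, abs_sub_lt_iff]
  have he : ∀ (y : En n) j, (MeasurableEquiv.toLp 2 (Fin n → ℝ)).symm y j = y j := fun _ _ => rfl
  constructor
  · intro h j; rw [he]; constructor <;> linarith [(h j).1, (h j).2]
  · intro h j; have := h j; rw [he] at this; constructor <;> linarith [this.1, this.2]

lemma volume_cube (hr : 0 ≤ r) : volume (cube x₀ r) = ENNReal.ofReal ((2*r)^n) := by
  rw [cube_eq, (EuclideanSpace.volume_preserving_symm_measurableEquiv_toLp (Fin n)).measure_preimage
    (by exact (MeasurableSet.univ_pi fun j => measurableSet_Icc).nullMeasurableSet)]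
  rw [volume_pi_pi]
  simp only [Real.volume_Icc]
  rw [Finset.prod_congr rfl (fun j _ => by ring_nf : ∀ j ∈ Finset.univ, ENNReal.ofReal (x₀ j + r - (x₀ j - r)) = ENNReal.ofReal (2*r))]
  rw [Finset.prod_const, Finset.card_univ, Fintype.card_fin,
    ← ENNReal.ofReal_pow (by linarith)]

lemma volume_ocube (hr : 0 ≤ r) : volume (ocube x₀ r) = ENNReal.ofReal ((2*r)^n) := by
  rw [ocube_eq, (EuclideanSpace.volume_preserving_symm_measurableEquiv_toLp (Fin n)).measure_preimage
    (by exact (MeasurableSet.univ_pi fun j => measurableSet_Ioo).nullMeasurableSet)]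
  rw [volume_pi_pi]
  simp only [Real.volume_Ioo]
  rw [Finset.prod_congr rfl (fun j _ => by ring_nf : ∀ j ∈ Finset.univ, ENNReal.ofReal (x₀ j + r - (x₀ j - r)) = ENNReal.ofReal (2*r))]
  rw [Finset.prod_const, Finset.card_univ, Fintype.card_fin,
    ← ENNReal.ofReal_pow (by linarith)]

lemma isClosed_cube : IsClosed (cube x₀ r) := by
  rw [cube_eq]
  have : ⇑(MeasurableEquiv.toLp 2 (Fin n → ℝ)).symm = ⇑(EuclideanSpace.equiv (Fin n) ℝ) := rfl
  rw [this]
  exact (isClosed_set_pi fun j _ => isClosed_Icc).preimage (EuclideanSpace.equiv (Fin n) ℝ).continuous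

lemma isOpen_ocube : IsOpen (ocube x₀ r) := by
  rw [ocube_eq]
  have : ⇑(MeasurableEquiv.toLp 2 (Fin n → ℝ)).symm = ⇑(EuclideanSpace.equiv (Fin n) ℝ) := rfl
  rw [this]
  exact (isOpen_set_pi Set.finite_univ fun j _ => isOpen_Ioo).preimage (EuclideanSpace.equiv (Fin n) ℝ).continuous


lemma measurableSet_cube : MeasurableSet (cube x₀ r) := (isClosed_cube x₀ r).measurableSet

lemma measurableSet_ocube : MeasurableSet (ocube x₀ r) := (isOpen_ocube x₀ r).measurableSet

variable {x₀ r}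

lemma ocube_subset_cube : ocube x₀ r ⊆ cube x₀ r := fun x hx j => (hx j).le

lemma cube_subset_ocube {r' : ℝ} (h : r' < r) : cube x₀ r' ⊆ ocube x₀ r :=
  fun x hx j => lt_of_le_of_lt (hx j) h

lemma cube_subset_cube {r' : ℝ} (h : r' ≤ r) : cube x₀ r' ⊆ cube x₀ r :=
  fun x hx j => le_trans (hx j) h

lemma ocube_subset_interior_cube : ocube x₀ r ⊆ interior (cube x₀ r) :=
  (isOpen_ocube x₀ r).subset_interior_iff.mpr (ocube_subset_cube)

lemma cube_ae_eq_ocube (hr : 0 ≤ r) : (cube x₀ r : Set (En n)) =ᵐ[volume] ocube x₀ r := by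
  refine (MeasureTheory.ae_eq_set).2 ⟨?_, ?_⟩
  · have h1 : volume (cube x₀ r \ ocube x₀ r) ≤ volume (cube x₀ r) - volume (ocube x₀ r) := by
      exact le_trans (le_of_eq (by rw [measure_diff (ocube_subset_cube)
        (measurableSet_ocube x₀ r).nullMeasurableSet
        (by rw [volume_ocube x₀ r hr]; exact ENNReal.ofReal_ne_top)])) le_rfl
    rw [volume_cube x₀ r hr, volume_ocube x₀ r hr] at h1
    simpa using h1
  · rw [Set.diff_eq_empty.2 ocube_subset_cube]
    simp

lemma dist_le_of_mem_cube (hr : 0 ≤ r) {x y : En n} (hx : x ∈ cube x₀ r)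
    (hy : y ∈ cube x₀ r) : dist x y ≤ Real.sqrt n * (2 * r) := by
  rw [EuclideanSpace.dist_eq]
  have h1 : ∑ i, dist (x i) (y i) ^ 2 ≤ (n : ℝ) * (2 * r) ^ 2 := by
    calc ∑ i, dist (x i) (y i) ^ 2 ≤ ∑ _i : Fin n, (2*r)^2 := by
          apply Finset.sum_le_sum
          intro i _
          have : dist (x i) (y i) ≤ 2 * r := by
            rw [Real.dist_eq]
            calc |x i - y i| = |(x i - x₀ i) + (x₀ i - y i)| := by ring_nf
              _ ≤ |x i - x₀ i| + |x₀ i - y i| := abs_add_le _ _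
              _ ≤ r + r := add_le_add (hx i) (by rw [abs_sub_comm]; exact hy i)
              _ = 2 * r := by ring
          exact pow_le_pow_left₀ dist_nonneg this 2
      _ = (n : ℝ) * (2 * r) ^ 2 := by simp [Finset.sum_const, Finset.card_univ]
  calc Real.sqrt (∑ i, dist (x i) (y i) ^ 2) ≤ Real.sqrt ((n : ℝ) * (2*r)^2) :=
        Real.sqrt_le_sqrt h1
    _ = Real.sqrt n * (2 * r) := by
        rw [Real.sqrt_mul (Nat.cast_nonneg n), Real.sqrt_sq (by linarith)]

lemma isCompact_cube (hr : 0 ≤ r) : IsCompact (cube x₀ r) := by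
  apply Metric.isCompact_of_isClosed_isBounded (isClosed_cube x₀ r)
  apply Metric.isBounded_iff.2
  exact ⟨Real.sqrt n * (2 * r), fun x hx y hy => dist_le_of_mem_cube hr hx hy⟩


section Analytic

variable {m : ℝ}

lemma convexOn_abs_rpow (hm : 1 ≤ m) : ConvexOn ℝ Set.univ fun t : ℝ => |t| ^ m := by
  have habs : ConvexOn ℝ Set.univ (fun t : ℝ => |t|) := by exact convexOn_univ_norm (E := ℝ)
  have himg : (fun t : ℝ => |t|) '' Set.univ = Set.Ici 0 := by
    ext y
    simp only [Set.image_univ, Set.mem_range, Set.mem_Ici]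
    constructor
    · rintro ⟨x, rfl⟩; exact abs_nonneg x
    · intro hy; exact ⟨y, abs_of_nonneg hy⟩
  have hrpow : ConvexOn ℝ ((fun t : ℝ => |t|) '' Set.univ) fun x : ℝ => x ^ m := by
    rw [himg]; exact convexOn_rpow hm
  have hmono : MonotoneOn (fun x : ℝ => x ^ m) ((fun t : ℝ => |t|) '' Set.univ) := by
    rw [himg]
    intro a ha b hb hab
    exact Real.rpow_le_rpow ha hab (by linarith)
  exact hrpow.comp habs hmono

lemma continuous_abs_rpow (hm : 0 ≤ m) : Continuous fun t : ℝ => |t| ^ m :=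
  continuous_abs.rpow_const (fun x => Or.inr hm)

lemma abs_rpow_add_le (hm : 0 ≤ m) (a b : ℝ) :
    |a + b| ^ m ≤ 2 ^ m * (|a| ^ m + |b| ^ m) := by
  have h1 : |a + b| ≤ 2 * max |a| |b| := by
    calc |a + b| ≤ |a| + |b| := abs_add_le a b
      _ ≤ max |a| |b| + max |a| |b| := add_le_add (le_max_left _ _) (le_max_right _ _)
      _ = 2 * max |a| |b| := by ring
  calc |a + b| ^ m ≤ (2 * max |a| |b|) ^ m :=
        Real.rpow_le_rpow (abs_nonneg _) h1 hm
    _ = 2 ^ m * (max |a| |b|) ^ m := Real.mul_rpow (by norm_num) (le_max_of_le_left (abs_nonneg a))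
    _ ≤ 2 ^ m * (|a| ^ m + |b| ^ m) := by
        apply mul_le_mul_of_nonneg_left _ (Real.rpow_nonneg (by norm_num) m)
        rcases max_cases |a| |b| with ⟨h, _⟩ | ⟨h, _⟩ <;> rw [h]
        · nlinarith [Real.rpow_nonneg (abs_nonneg b) m]
        · nlinarith [Real.rpow_nonneg (abs_nonneg a) m]

variable {n : ℕ}

/-- Jensen's inequality for the average over a set. -/
lemma jensen_avg (hm : 1 ≤ m) {S : Set (En n)} (hS : MeasurableSet S)
    (h0 : volume S ≠ 0) (hfin : volume S ≠ ⊤) {g : En n → ℝ}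
    (hgi : IntegrableOn g S volume) (hgm : IntegrableOn (fun x => |g x| ^ m) S volume) :
    |(volume S).toReal⁻¹ * ∫ x in S, g x| ^ m ≤ (volume S).toReal⁻¹ * ∫ x in S, |g x| ^ m := by
  haveI : IsFiniteMeasure (volume.restrict S) :=
    ⟨by rw [Measure.restrict_apply_univ]; exact hfin.lt_top⟩
  haveI : NeZero (volume.restrict S) := by
    refine ⟨fun h => h0 ?_⟩
    rw [← Measure.restrict_apply_univ, h]; rfl
  have := (convexOn_abs_rpow hm).map_average_le (s := Set.univ)
    ((continuous_abs_rpow (by linarith)).continuousOn) isClosed_univ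
    (Filter.Eventually.of_forall fun x => Set.mem_univ _) hgi hgm
  rw [average_eq, average_eq] at this
  simpa [Measure.restrict_apply_univ, smul_eq_mul, measureReal_def, ENNReal.abs_toReal] using this

/-- Sum of integrals of a nonnegative function over pairwise disjoint measurable subsets of `Ω`
is at most the integral over `Ω`. -/
lemma sum_setIntegral_le {f : En n → ℝ} (hnn : ∀ x, 0 ≤ f x) {Ω : Set (En n)}
    (hfi : IntegrableOn f Ω volume) {ι : Type*} [DecidableEq ι] (A : Finset ι)
    (s : ι → Set (En n)) (hmeas : ∀ a ∈ A, MeasurableSet (s a))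
    (hdisj : (A : Set ι).Pairwise (Function.onFun Disjoint s)) (hsub : ∀ a ∈ A, s a ⊆ Ω) :
    ∑ a ∈ A, ∫ x in s a, f x ≤ ∫ x in Ω, f x := by
  have hint : ∀ a ∈ A, IntegrableOn f (s a) volume := fun a ha =>
    hfi.mono_set (hsub a ha)
  rw [← integral_biUnion_finset A hmeas hdisj hint]
  exact setIntegral_mono_set hfi
    (Filter.Eventually.of_forall fun x => hnn x)
    (HasSubset.Subset.eventuallyLE (Set.iUnion₂_subset hsub))


lemma ofReal_m_ne_zero (hm : 1 ≤ m) : ENNReal.ofReal m ≠ 0 := by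
  simp [ENNReal.ofReal_eq_zero]; linarith

lemma aesm_abs_rpow (hm : 1 ≤ m) {μ : Measure (En n)} {h : En n → ℝ}
    (hh : AEStronglyMeasurable h μ) :
    AEStronglyMeasurable (fun x => |h x| ^ m) μ :=
  (continuous_abs_rpow (by linarith)).comp_aestronglyMeasurable hh

lemma integral_abs_rpow_le_of_eLpNorm_le (hm : 1 ≤ m) {h : En n → ℝ}
    (hmem : MemLp h (ENNReal.ofReal m) volume) {δ : ℝ} (hδ : 0 ≤ δ)
    (hle : eLpNorm h (ENNReal.ofReal m) volume ≤ ENNReal.ofReal δ ^ (1/m)) :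
    ∫ x, |h x| ^ m ≤ δ := by
  have hm0 : m ≠ 0 := by linarith
  have hmpos : (0:ℝ) < m := by linarith
  have key : ∫⁻ x, ENNReal.ofReal (|h x| ^ m) ≤ ENNReal.ofReal δ := by
    have h1 := ENNReal.rpow_le_rpow hle (le_of_lt hmpos)
    rw [eLpNorm_eq_lintegral_rpow_enorm_toReal (ofReal_m_ne_zero hm) ENNReal.ofReal_ne_top,
      ENNReal.toReal_ofReal (by linarith)] at h1
    rw [← ENNReal.rpow_mul, ← ENNReal.rpow_mul, one_div_mul_cancel hm0,
      ENNReal.rpow_one, ENNReal.rpow_one] at h1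
    refine le_trans (le_of_eq ?_) h1
    congr 1
    ext x
    rw [← Real.norm_eq_abs, ← ENNReal.ofReal_rpow_of_nonneg (norm_nonneg _) (le_of_lt hmpos),
      ofReal_norm_eq_enorm]
  rw [MeasureTheory.integral_eq_lintegral_of_nonneg_ae
    (Filter.Eventually.of_forall fun x => Real.rpow_nonneg (abs_nonneg _) m)
    (aesm_abs_rpow hm hmem.1)]
  exact ENNReal.toReal_le_of_le_ofReal hδ key

lemma exists_approx (hm : 1 ≤ m) {f : En n → ℝ} (hmem : MemLp f (ENNReal.ofReal m) volume)
    {δ : ℝ} (hδ : 0 < δ) :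
    ∃ g : En n → ℝ, Continuous g ∧ HasCompactSupport g ∧
      Integrable (fun x => |f x - g x| ^ m) volume ∧ ∫ x, |f x - g x| ^ m ≤ δ := by
  have hε : (ENNReal.ofReal δ ^ (1/m) : ENNReal) ≠ 0 := by
    intro hc
    rw [ENNReal.rpow_eq_zero_iff] at hc
    rcases hc with ⟨h1, _⟩ | ⟨h1, _⟩
    · exact (by simp [ENNReal.ofReal_eq_zero]; linarith : ENNReal.ofReal δ ≠ 0) h1
    · exact ENNReal.ofReal_ne_top h1
  obtain ⟨g, hgsupp, hgle, hgc, hgmem⟩ :=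
    hmem.exists_hasCompactSupport_eLpNorm_sub_le ENNReal.ofReal_ne_top hε
  have hsubmem : MemLp (f - g) (ENNReal.ofReal m) volume := hmem.sub hgmem
  have hint : Integrable (fun x => |f x - g x| ^ m) volume := by
    have := hsubmem.integrable_norm_rpow (ofReal_m_ne_zero hm) ENNReal.ofReal_ne_top
    rw [ENNReal.toReal_ofReal (by linarith)] at this
    simpa [Real.norm_eq_abs] using this
  refine ⟨g, hgc, hgsupp, hint, ?_⟩
  have := integral_abs_rpow_le_of_eLpNorm_le hm hsubmem hδ.le hgle
  simpa using this

lemma memLp_indicator_of_integrableOn (hm : 1 ≤ m) {Ω : Set (En n)} (hΩ : MeasurableSet Ω)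
    {f : En n → ℝ} (hfmeas : AEStronglyMeasurable f (volume.restrict Ω))
    (hfi : IntegrableOn (fun x => |f x| ^ m) Ω volume) :
    MemLp (Ω.indicator f) (ENNReal.ofReal m) volume := by
  rw [memLp_indicator_iff_restrict hΩ]
  have h1 : (ENNReal.ofReal m / ENNReal.ofReal m) = (1 : ENNReal) :=
    ENNReal.div_self (ofReal_m_ne_zero hm) ENNReal.ofReal_ne_top
  rw [← memLp_norm_rpow_iff (q := ENNReal.ofReal m) hfmeas (ofReal_m_ne_zero hm)
    ENNReal.ofReal_ne_top, h1, memLp_one_iff_integrable,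
    ENNReal.toReal_ofReal (by linarith)]
  simpa [Real.norm_eq_abs, IntegrableOn] using hfi


lemma integrableOn_of_abs_rpow (hm : 1 ≤ m) {S : Set (En n)} (hSfin : volume S ≠ ⊤)
    {f : En n → ℝ} (hfa : AEStronglyMeasurable f (volume.restrict S))
    (hfm : IntegrableOn (fun x => |f x| ^ m) S volume) : IntegrableOn f S volume := by
  have hci : IntegrableOn (fun _ => (1:ℝ)) S volume := integrableOn_const hSfin.lt_top.ne
  refine Integrable.mono' (g := fun x => 1 + |f x| ^ m) (hci.add hfm) hfa
    (Filter.Eventually.of_forall fun x => ?_)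
  rcases le_or_gt (|f x|) 1 with h | h
  · calc ‖f x‖ = |f x| := Real.norm_eq_abs _
      _ ≤ 1 + |f x| ^ m := le_add_of_le_of_nonneg h (Real.rpow_nonneg (abs_nonneg _) m)
  · calc ‖f x‖ = |f x| ^ (1:ℝ) := by rw [Real.rpow_one]; exact Real.norm_eq_abs _
      _ ≤ |f x| ^ m := Real.rpow_le_rpow_of_exponent_le h.le hm
      _ ≤ 1 + |f x| ^ m := by linarith


lemma aux_sum3 {t x y z : ℝ} (ht : 1 ≤ t) (hx : 0 ≤ x) (hy : 0 ≤ y) (hz : 0 ≤ z) :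
    t * (x + t * (y + z)) ≤ t * t * (x + y + z) := by
  nlinarith [mul_nonneg (mul_nonneg (by linarith : (0:ℝ) ≤ t) hx) (by linarith : (0:ℝ) ≤ t - 1)]

set_option maxHeartbeats 1000000 in
lemma tendsto_sum_avg (hm : 1 ≤ m) {Ω : Set (En n)} (hΩm : MeasurableSet Ω)
    (hΩfin : volume Ω ≠ ⊤)
    (lam ρ : ℕ → ℝ) (hlam : ∀ s, 3 ≤ lam s) (hρ : ∀ s, 0 < ρ s)
    (hlr : Tendsto (fun s => lam s * ρ s) atTop (𝓝 0))
    (A : ℕ → Finset (Fin n → ℤ)) (c : ℕ → (Fin n → ℤ) → En n)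
    (hsub : ∀ s, ∀ α ∈ A s, cube (c s α) (lam s * ρ s) ⊆ Ω)
    (hdisj : ∀ s, (↑(A s) : Set (Fin n → ℤ)).Pairwise
      (Function.onFun Disjoint fun α => ocube (c s α) (lam s * ρ s)))
    {f : En n → ℝ} (hfmeas : Measurable f)
    (hfm : IntegrableOn (fun x => |f x| ^ m) Ω volume) :
    Tendsto (fun s => ∑ α ∈ A s, ∫ x in cube (c s α) ((lam s - 2) * ρ s),
      |((2 * lam s * ρ s) ^ n)⁻¹ * (∫ y in cube (c s α) (lam s * ρ s), f y) - f x| ^ m)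
      atTop (𝓝 0) := by
  have hm0 : (0:ℝ) ≤ m := by linarith
  set ft : En n → ℝ := Ω.indicator f with hft_def
  have hft_eq : ∀ x ∈ Ω, ft x = f x := fun x hx => Set.indicator_of_mem hx f
  have hftmem : MemLp ft (ENNReal.ofReal m) volume :=
    memLp_indicator_of_integrableOn hm hΩm
      (hfmeas.aestronglyMeasurable.restrict) hfm
  have hfΩ : IntegrableOn f Ω volume :=
    integrableOn_of_abs_rpow hm hΩfin (hfmeas.aestronglyMeasurable.restrict) hfm
  set B : ℝ := (4:ℝ) ^ m with hB_def
  have hB : 0 < B := Real.rpow_pos_of_pos (by norm_num) m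
  rw [Metric.tendsto_nhds]
  intro ε hε
  set δ₀ : ℝ := ε / (4 * B) with hδ₀_def
  have hδ₀ : 0 < δ₀ := by positivity
  obtain ⟨g, hgc, hgsupp, hDint, hDle⟩ := exists_approx hm hftmem hδ₀
  set V : ℝ := (volume Ω).toReal with hV_def
  have hV0 : 0 ≤ V := ENNReal.toReal_nonneg
  set ε₁ : ℝ := min 1 (ε / (4 * B * (V + 1))) with hε₁_def
  have hε₁ : 0 < ε₁ := lt_min one_pos (by positivity)
  have hε₁m : B * (ε₁ ^ m * V) ≤ ε / 4 := by
    have h1 : ε₁ ^ m ≤ ε₁ := by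
      calc ε₁ ^ m ≤ ε₁ ^ (1:ℝ) :=
            Real.rpow_le_rpow_of_exponent_ge hε₁ (min_le_left _ _) hm
        _ = ε₁ := Real.rpow_one _
    have h2 : ε₁ ≤ ε / (4 * B * (V + 1)) := min_le_right _ _
    have h3 : ε₁ ^ m * V ≤ ε₁ * (V + 1) := by
      have := Real.rpow_nonneg hε₁.le m
      nlinarith
    have h4 : ε₁ * (V + 1) ≤ ε / (4 * B) := by
      rw [div_mul_eq_div_div] at h2
      calc ε₁ * (V + 1) ≤ (ε / (4 * B) / (V + 1)) * (V + 1) := by nlinarith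
        _ = ε / (4 * B) := by field_simp
    calc B * (ε₁ ^ m * V) ≤ B * (ε / (4 * B)) := by nlinarith
      _ = ε / 4 := by field_simp
  have hgu : UniformContinuous g :=
    hgc.uniformContinuous_of_tendsto_cocompact hgsupp.is_zero_at_infty
  rw [Metric.uniformContinuous_iff] at hgu
  obtain ⟨δ₂, hδ₂, hgδ₂⟩ := hgu ε₁ hε₁
  have hsmall : ∀ᶠ s in atTop, Real.sqrt n * 2 * (lam s * ρ s) < δ₂ := by
    have : Tendsto (fun s => Real.sqrt n * 2 * (lam s * ρ s)) atTop (𝓝 0) := by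
      have := hlr.const_mul (Real.sqrt n * 2)
      simpa using this
    exact this.eventually_lt_const hδ₂
  filter_upwards [hsmall] with s hs
  -- now fixed s
  set r : ℝ := lam s * ρ s with hr_def
  set r' : ℝ := (lam s - 2) * ρ s with hr'_def
  have hr : 0 < r := mul_pos (by linarith [hlam s]) (hρ s)
  have hr'0 : 0 ≤ r' := mul_nonneg (by linarith [hlam s]) (hρ s).le
  have hr'r : r' < r := by
    have := hρ s
    rw [hr_def, hr'_def]
    nlinarith
  set P : ℝ := (2 * lam s * ρ s) ^ n with hP_def
  have hP2r : P = (2 * r) ^ n := by rw [hP_def, hr_def]; ring_nf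
  have hP : 0 < P := by rw [hP2r]; positivity
  have hvolK : ∀ α, volume (cube (c s α) r) = ENNReal.ofReal ((2*r)^n) :=
    fun α => volume_cube _ _ hr.le
  have hvolKr : ∀ α, (volume (cube (c s α) r)).toReal = P := by
    intro α
    rw [hvolK α, ENNReal.toReal_ofReal (by positivity), hP2r]
  have hvolK' : ∀ α, (volume (cube (c s α) r')).toReal = (2*r')^n := by
    intro α
    rw [volume_cube _ _ hr'0, ENNReal.toReal_ofReal (by positivity)]
  have hvolK'ne : ∀ α, volume (cube (c s α) r') ≠ ⊤ :=
    fun α => by rw [volume_cube _ _ hr'0]; exact ENNReal.ofReal_ne_top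
  have hK'disj : (↑(A s) : Set (Fin n → ℤ)).Pairwise
      (Function.onFun Disjoint fun α => cube (c s α) r') := by
    intro a ha b hb hab
    exact (hdisj s ha hb hab).mono (cube_subset_ocube hr'r) (cube_subset_ocube hr'r)
  have hK'subΩ : ∀ α ∈ A s, cube (c s α) r' ⊆ Ω :=
    fun α hα => (cube_subset_cube hr'r.le).trans (hsub s α hα)
  -- the three sum estimates
  -- first, per-α facts
  have hfK : ∀ α ∈ A s, IntegrableOn f (cube (c s α) r) volume :=
    fun α hα => hfΩ.mono_set (hsub s α hα)
  have hgK : ∀ α, IntegrableOn g (cube (c s α) r) volume :=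
    fun α => hgc.continuousOn.integrableOn_compact (isCompact_cube hr.le)
  have hfgK : ∀ α ∈ A s, IntegrableOn (fun x => |f x - g x| ^ m) (cube (c s α) r) volume := by
    intro α hα
    refine (hDint.integrableOn.mono_set (Set.subset_univ _)).congr_fun ?_ (measurableSet_cube _ _)
    intro x hx
    simp only [hft_eq x (hsub s α hα hx)]
  have hfgK' : ∀ α ∈ A s, IntegrableOn (fun x => |ft x - g x| ^ m) (cube (c s α) r') volume :=
    fun α hα => hDint.integrableOn.mono_set (Set.subset_univ _)
  -- Jensen-type bound for the f - g averages
  have hjensen : ∀ α ∈ A s,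
      |P⁻¹ * ∫ y in cube (c s α) r, (f y - g y)| ^ m
        ≤ P⁻¹ * ∫ y in cube (c s α) r, |f y - g y| ^ m := by
    intro α hα
    have := jensen_avg (n := n) hm (measurableSet_cube (c s α) r)
      (by rw [hvolK α]; simp [ENNReal.ofReal_eq_zero]; nlinarith [hP, hP2r])
      (by rw [hvolK α]; exact ENNReal.ofReal_ne_top)
      (g := fun y => f y - g y) ((hfK α hα).sub (hgK α)) (hfgK α hα)
    rwa [hvolKr α] at this
  -- pointwise estimate on the inner cube
  have hpoint : ∀ α ∈ A s, ∀ x ∈ cube (c s α) r',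
      |P⁻¹ * (∫ y in cube (c s α) r, f y) - f x| ^ m ≤
        B * (|P⁻¹ * ∫ y in cube (c s α) r, (f y - g y)| ^ m
          + |P⁻¹ * (∫ y in cube (c s α) r, g y) - g x| ^ m
          + |ft x - g x| ^ m) := by
    intro α hα x hx
    have hxΩ : x ∈ Ω := hK'subΩ α hα hx
    have hid : P⁻¹ * (∫ y in cube (c s α) r, f y) - f x =
        (P⁻¹ * ∫ y in cube (c s α) r, (f y - g y)) +
        ((P⁻¹ * (∫ y in cube (c s α) r, g y) - g x) + (g x - f x)) := by
      rw [integral_sub (hfK α hα) (hgK α)]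
      ring
    have habs1 : |g x - f x| = |ft x - g x| := by
      rw [hft_eq x hxΩ, abs_sub_comm]
    rw [hid]
    set a := P⁻¹ * ∫ y in cube (c s α) r, (f y - g y)
    set b := P⁻¹ * (∫ y in cube (c s α) r, g y) - g x
    set d := g x - f x
    have h2 : (0:ℝ) ≤ 2 ^ m := Real.rpow_nonneg (by norm_num) m
    have h1t : (1:ℝ) ≤ 2 ^ m := by
      calc (1:ℝ) = 1 ^ m := (Real.one_rpow m).symm
        _ ≤ 2 ^ m := Real.rpow_le_rpow (by norm_num) (by norm_num) hm0
    have h3 : (2:ℝ) ^ m * 2 ^ m = B := by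
      rw [hB_def, ← Real.mul_rpow (by norm_num) (by norm_num)]
      norm_num
    calc |a + (b + d)| ^ m ≤ 2 ^ m * (|a| ^ m + |b + d| ^ m) := abs_rpow_add_le hm0 _ _
      _ ≤ 2 ^ m * (|a| ^ m + 2 ^ m * (|b| ^ m + |d| ^ m)) :=
          mul_le_mul_of_nonneg_left (add_le_add le_rfl (abs_rpow_add_le hm0 b d)) h2
      _ ≤ B * (|a| ^ m + |b| ^ m + |d| ^ m) := by
          rw [← h3]
          exact aux_sum3 h1t (Real.rpow_nonneg (abs_nonneg a) m)
            (Real.rpow_nonneg (abs_nonneg b) m) (Real.rpow_nonneg (abs_nonneg d) m)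
      _ = B * (|a| ^ m + |b| ^ m + |ft x - g x| ^ m) := by rw [habs1]
  -- middle pointwise bound via uniform continuity
  have hmid : ∀ α ∈ A s, ∀ x ∈ cube (c s α) r',
      |P⁻¹ * (∫ y in cube (c s α) r, g y) - g x| ≤ ε₁ := by
    intro α hα x hx
    have hvollt : volume (cube (c s α) r) < ⊤ := by
      rw [hvolK α]; exact ENNReal.ofReal_lt_top
    have hconst : IntegrableOn (fun _ => g x) (cube (c s α) r) volume :=
      integrableOn_const hvollt.ne
    have heq : P⁻¹ * (∫ y in cube (c s α) r, g y) - g x =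
        P⁻¹ * ∫ y in cube (c s α) r, (g y - g x) := by
      rw [integral_sub (hgK α) hconst, setIntegral_const, measureReal_def, smul_eq_mul, mul_sub, hvolKr α,
        ← mul_assoc, inv_mul_cancel₀ (ne_of_gt hP), one_mul]
    rw [heq, abs_mul, abs_inv, abs_of_pos hP]
    have hbound : ‖∫ y in cube (c s α) r, (g y - g x)‖ ≤ ε₁ * P := by
      have h1 := norm_setIntegral_le_of_norm_le_const (μ := volume)
        (f := fun y => g y - g x) (s := cube (c s α) r) (C := ε₁) hvollt ?_
      · rwa [measureReal_def, hvolKr α] at h1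
      · intro y hy
        have hdxy : dist y x < δ₂ := by
          refine lt_of_le_of_lt (dist_le_of_mem_cube hr.le hy ((cube_subset_cube hr'r.le) hx)) ?_
          calc Real.sqrt n * (2 * r) = Real.sqrt n * 2 * r := by ring
            _ < δ₂ := hs
        rw [Real.norm_eq_abs, ← Real.dist_eq]
        exact (hgδ₂ hdxy).le
    rw [Real.norm_eq_abs] at hbound
    calc P⁻¹ * |∫ y in cube (c s α) r, (g y - g x)| ≤ P⁻¹ * (ε₁ * P) :=
          mul_le_mul_of_nonneg_left hbound (inv_nonneg.2 hP.le)
      _ = ε₁ := by field_simp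
  -- per-α integral bound
  have hper : ∀ α ∈ A s,
      (∫ x in cube (c s α) r', |P⁻¹ * (∫ y in cube (c s α) r, f y) - f x| ^ m) ≤
        B * ((2*r')^n * |P⁻¹ * ∫ y in cube (c s α) r, (f y - g y)| ^ m
          + ε₁ ^ m * (2*r')^n
          + ∫ x in cube (c s α) r', |ft x - g x| ^ m) := by
    intro α hα
    have hvol'lt : volume (cube (c s α) r') < ⊤ := (hvolK'ne α).lt_top
    have hconst1 : IntegrableOn
        (fun _ => |P⁻¹ * ∫ y in cube (c s α) r, (f y - g y)| ^ m)
        (cube (c s α) r') volume := integrableOn_const hvol'lt.ne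
    have hmidcont : Continuous (fun x => |P⁻¹ * (∫ y in cube (c s α) r, g y) - g x| ^ m) :=
      (continuous_abs_rpow hm0).comp (continuous_const.sub hgc)
    have hmidint : IntegrableOn (fun x => |P⁻¹ * (∫ y in cube (c s α) r, g y) - g x| ^ m)
        (cube (c s α) r') volume :=
      hmidcont.continuousOn.integrableOn_compact (isCompact_cube hr'0)
    have hlastint : IntegrableOn (fun x => |ft x - g x| ^ m) (cube (c s α) r') volume :=
      hDint.integrableOn
    have hRHSint : Integrable (fun x =>
        B * (|P⁻¹ * ∫ y in cube (c s α) r, (f y - g y)| ^ m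
          + |P⁻¹ * (∫ y in cube (c s α) r, g y) - g x| ^ m + |ft x - g x| ^ m))
        (volume.restrict (cube (c s α) r')) :=
      (((hconst1.add hmidint).add hlastint).const_mul B)
    have step1 : (∫ x in cube (c s α) r', |P⁻¹ * (∫ y in cube (c s α) r, f y) - f x| ^ m) ≤
        ∫ x in cube (c s α) r',
          B * (|P⁻¹ * ∫ y in cube (c s α) r, (f y - g y)| ^ m
            + |P⁻¹ * (∫ y in cube (c s α) r, g y) - g x| ^ m + |ft x - g x| ^ m) := by
      refine integral_mono_of_nonneg
        (Filter.Eventually.of_forall fun x => Real.rpow_nonneg (abs_nonneg _) m) hRHSint ?_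
      rw [EventuallyLE, ae_restrict_iff' (measurableSet_cube _ _)]
      exact Filter.Eventually.of_forall fun x hx => hpoint α hα x hx
    refine le_trans step1 ?_
    rw [integral_const_mul]
    refine mul_le_mul_of_nonneg_left ?_ hB.le
    have h12 : IntegrableOn (fun x =>
        |P⁻¹ * ∫ y in cube (c s α) r, (f y - g y)| ^ m
          + |P⁻¹ * (∫ y in cube (c s α) r, g y) - g x| ^ m) (cube (c s α) r') volume :=
      hconst1.add hmidint
    rw [integral_add h12 hlastint, integral_add hconst1 hmidint]
    refine add_le_add (add_le_add ?_ ?_) le_rfl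
    · rw [setIntegral_const, measureReal_def, smul_eq_mul, hvolK' α]
    · have hb : (∫ x in cube (c s α) r',
          |P⁻¹ * (∫ y in cube (c s α) r, g y) - g x| ^ m) ≤
          ∫ _x in cube (c s α) r', ε₁ ^ m := by
        refine integral_mono_of_nonneg
          (Filter.Eventually.of_forall fun x => Real.rpow_nonneg (abs_nonneg _) m)
          (integrableOn_const hvol'lt.ne) ?_
        rw [EventuallyLE, ae_restrict_iff' (measurableSet_cube _ _)]
        refine Filter.Eventually.of_forall fun x hx => ?_
        exact Real.rpow_le_rpow (abs_nonneg _) (hmid α hα x hx) hm0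
      refine le_trans hb ?_
      rw [setIntegral_const, measureReal_def, smul_eq_mul, hvolK' α, mul_comm]
  -- sum the estimates
  have hnn_ft : ∀ x, (0:ℝ) ≤ |ft x - g x| ^ m := fun x => Real.rpow_nonneg (abs_nonneg _) m
  have hsum_cubes : ∑ α ∈ A s, (∫ x in cube (c s α) r, |ft x - g x| ^ m) ≤ δ₀ := by
    have heq : ∀ α ∈ A s, (∫ x in cube (c s α) r, |ft x - g x| ^ m) =
        ∫ x in ocube (c s α) r, |ft x - g x| ^ m :=
      fun α _ => setIntegral_congr_set (cube_ae_eq_ocube hr.le)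
    rw [Finset.sum_congr rfl heq]
    have h1 := sum_setIntegral_le (f := fun x => |ft x - g x| ^ m) hnn_ft
      (Ω := Set.univ) (integrableOn_univ.2 hDint) (A s) (fun α => ocube (c s α) r)
      (fun α _ => measurableSet_ocube _ _) (hdisj s) (fun α _ => Set.subset_univ _)
    rw [setIntegral_univ] at h1
    exact le_trans h1 hDle
  have hsumX : ∑ α ∈ A s, (2*r')^n * |P⁻¹ * ∫ y in cube (c s α) r, (f y - g y)| ^ m ≤ δ₀ := by
    refine le_trans (Finset.sum_le_sum (fun α hα => ?_)) hsum_cubes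
    have hXnn : (0:ℝ) ≤ |P⁻¹ * ∫ y in cube (c s α) r, (f y - g y)| ^ m :=
      Real.rpow_nonneg (abs_nonneg _) m
    have h1 : ((2*r')^n : ℝ) ≤ P := by
      rw [hP2r]
      exact pow_le_pow_left₀ (by linarith) (by linarith) n
    have h2 : P * |P⁻¹ * ∫ y in cube (c s α) r, (f y - g y)| ^ m ≤
        ∫ y in cube (c s α) r, |f y - g y| ^ m := by
      have := mul_le_mul_of_nonneg_left (hjensen α hα) hP.le
      rwa [← mul_assoc, mul_inv_cancel₀ (ne_of_gt hP), one_mul] at this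
    have h3 : (∫ y in cube (c s α) r, |f y - g y| ^ m) =
        ∫ y in cube (c s α) r, |ft y - g y| ^ m := by
      refine setIntegral_congr_fun (measurableSet_cube _ _) fun y hy => ?_
      simp only [hft_eq y (hsub s α hα hy)]
    calc (2*r')^n * |P⁻¹ * ∫ y in cube (c s α) r, (f y - g y)| ^ m ≤
          P * |P⁻¹ * ∫ y in cube (c s α) r, (f y - g y)| ^ m :=
            mul_le_mul_of_nonneg_right h1 hXnn
      _ ≤ ∫ y in cube (c s α) r, |ft y - g y| ^ m := by rw [← h3]; exact h2
  have hsumV : ∑ _α ∈ A s, ((2*r')^n : ℝ) ≤ V := by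
    have heq : ∀ α ∈ A s, ((2*r')^n : ℝ) = ∫ _x in cube (c s α) r', (1:ℝ) := by
      intro α _
      rw [setIntegral_const, measureReal_def, smul_eq_mul, mul_one, hvolK' α]
    rw [Finset.sum_congr rfl heq]
    have h1 := sum_setIntegral_le (f := fun _ => (1:ℝ)) (fun _ => zero_le_one)
      (Ω := Ω) (integrableOn_const hΩfin.lt_top.ne) (A s)
      (fun α => cube (c s α) r') (fun α _ => measurableSet_cube _ _) hK'disj hK'subΩ
    refine le_trans h1 ?_
    rw [setIntegral_const, measureReal_def, smul_eq_mul, mul_one]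
  have hsumZ : ∑ α ∈ A s, (∫ x in cube (c s α) r', |ft x - g x| ^ m) ≤ δ₀ := by
    have h1 := sum_setIntegral_le (f := fun x => |ft x - g x| ^ m) hnn_ft
      (Ω := Set.univ) (integrableOn_univ.2 hDint) (A s) (fun α => cube (c s α) r')
      (fun α _ => measurableSet_cube _ _) hK'disj (fun α _ => Set.subset_univ _)
    rw [setIntegral_univ] at h1
    exact le_trans h1 hDle
  -- conclude
  have hTnn : (0:ℝ) ≤ ∑ α ∈ A s, ∫ x in cube (c s α) r',
      |P⁻¹ * (∫ y in cube (c s α) r, f y) - f x| ^ m :=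
    Finset.sum_nonneg fun α _ => setIntegral_nonneg (measurableSet_cube _ _)
      fun x _ => Real.rpow_nonneg (abs_nonneg _) m
  rw [Real.dist_eq, sub_zero, abs_of_nonneg hTnn]
  have hε₁mnn : (0:ℝ) ≤ ε₁ ^ m := Real.rpow_nonneg hε₁.le m
  have hBδ₀ : B * δ₀ = ε / 4 := by rw [hδ₀_def]; field_simp
  calc (∑ α ∈ A s, ∫ x in cube (c s α) r',
        |P⁻¹ * (∫ y in cube (c s α) r, f y) - f x| ^ m)
      ≤ ∑ α ∈ A s, B * ((2*r')^n * |P⁻¹ * ∫ y in cube (c s α) r, (f y - g y)| ^ m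
          + ε₁ ^ m * (2*r')^n
          + ∫ x in cube (c s α) r', |ft x - g x| ^ m) :=
        Finset.sum_le_sum fun α hα => hper α hα
    _ = B * ((∑ α ∈ A s, (2*r')^n * |P⁻¹ * ∫ y in cube (c s α) r, (f y - g y)| ^ m)
          + (∑ _α ∈ A s, ε₁ ^ m * ((2*r')^n : ℝ))
          + ∑ α ∈ A s, ∫ x in cube (c s α) r', |ft x - g x| ^ m) := by
        rw [← Finset.mul_sum, Finset.sum_add_distrib, Finset.sum_add_distrib]
    _ ≤ B * (δ₀ + ε₁ ^ m * V + δ₀) := by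
        refine mul_le_mul_of_nonneg_left ?_ hB.le
        refine add_le_add (add_le_add hsumX ?_) hsumZ
        rw [← Finset.mul_sum]
        exact mul_le_mul_of_nonneg_left hsumV hε₁mnn
    _ = B * δ₀ + B * (ε₁ ^ m * V) + B * δ₀ := by ring
    _ < ε := by rw [hBδ₀]; linarith

end Analytic

end Aux


/-- (5.27): the piecewise-constant functions `q'_s`, equal on each inner cube `K'_s(α)` to the
mean of `q_s` over `K_s(α)`, converge to `q₀` strongly in `L^m(Ω)`. -/
theorem stmt18 {n : ℕ} (Ω : Set (En n)) (hΩo : IsOpen Ω) (hΩb : Bornology.IsBounded Ω)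
    (m : ℝ) (hm : 2 ≤ m)
    (lam ρ : ℕ → ℝ) (hlam : ∀ s, 3 ≤ lam s) (hρ : ∀ s, 0 < ρ s)
    (hlr : Tendsto (fun s => lam s * ρ s) atTop (𝓝 0))
    (A : ℕ → Finset (Fin n → ℤ))
    (Ks Ks' : (s : ℕ) → (Fin n → ℤ) → Set (En n))
    (hKs : ∀ s α, Ks s α = cube (gridPt (2 * lam s * ρ s) α) (lam s * ρ s))
    (hKs' : ∀ s α, Ks' s α = cube (gridPt (2 * lam s * ρ s) α) ((lam s - 2) * ρ s))
    (hsub : ∀ s, ∀ α ∈ A s, Ks s α ⊆ Ω)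
    (hdisj : ∀ s, ∀ α ∈ A s, ∀ β ∈ A s, α ≠ β →
      Disjoint (interior (Ks s α)) (interior (Ks s β)))
    (hUs : Tendsto (fun s => (volume (Ω \ ⋃ α ∈ A s, Ks s α)).toReal) atTop (𝓝 0))
    (hann : Tendsto (fun s => (volume (⋃ α ∈ A s, Ks s α \ Ks' s α)).toReal) atTop (𝓝 0))
    (q : ℕ → En n → ℝ) (q₀ : En n → ℝ)
    (hqdiff : ∀ s, Differentiable ℝ (q s)) (hq₀meas : Measurable q₀)
    (hq₀m : IntegrableOn (fun x => |q₀ x| ^ m) Ω volume)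
    (hqm : ∀ s, IntegrableOn (fun x => |q s x| ^ m) Ω volume)
    (hqconv : Tendsto (fun s => ∫ x in Ω, |q s x - q₀ x| ^ m) atTop (𝓝 0))
    (M : ℝ) (hgrad : ∀ s, ∫ x in Ω, ‖egrad (q s) x‖ ^ m ≤ M)
    (qmean : (s : ℕ) → (Fin n → ℤ) → ℝ)
    (hqmean : ∀ s, ∀ α ∈ A s,
      qmean s α = ((2 * lam s * ρ s) ^ n)⁻¹ * ∫ x in Ks s α, q s x)
    (q' : ℕ → En n → ℝ)
    (hq' : ∀ s x, q' s x = ∑ α ∈ A s, Set.indicator (Ks' s α) (fun _ => qmean s α) x) :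
    Tendsto (fun s => ∫ x in Ω, |q' s x - q₀ x| ^ m) atTop (𝓝 0) := by
  
  have hm1 : (1:ℝ) ≤ m := by linarith
  have hm0 : (0:ℝ) ≤ m := by linarith
  have hΩm : MeasurableSet Ω := hΩo.measurableSet
  have hΩfin : volume Ω ≠ ⊤ := hΩb.measure_lt_top.ne
  set c : ℕ → (Fin n → ℤ) → En n := fun s α => gridPt (2 * lam s * ρ s) α with hc_def
  have hr : ∀ s, 0 < lam s * ρ s := fun s => mul_pos (by linarith [hlam s]) (hρ s)
  have hr'0 : ∀ s, 0 ≤ (lam s - 2) * ρ s := fun s => mul_nonneg (by linarith [hlam s]) (hρ s).le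
  have hr'r : ∀ s, (lam s - 2) * ρ s < lam s * ρ s := by
    intro s; nlinarith [hρ s, hlam s]
  have hsubC : ∀ s, ∀ α ∈ A s, cube (c s α) (lam s * ρ s) ⊆ Ω := by
    intro s α hα; rw [← hKs s α]; exact hsub s α hα
  have hdisjO : ∀ s, (↑(A s) : Set (Fin n → ℤ)).Pairwise
      (Function.onFun Disjoint fun α => Aux.ocube (c s α) (lam s * ρ s)) := by
    intro s α hα β hβ hne
    have := hdisj s α hα β hβ hne
    rw [hKs s α, hKs s β] at this
    exact this.mono Aux.ocube_subset_interior_cube Aux.ocube_subset_interior_cube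
  have hdisjK' : ∀ s, (↑(A s) : Set (Fin n → ℤ)).Pairwise (Function.onFun Disjoint fun α => Ks' s α) := by
    intro s α hα β hβ hne
    have h1 : Ks' s α ⊆ Aux.ocube (c s α) (lam s * ρ s) := by
      rw [hKs']; exact Aux.cube_subset_ocube (hr'r _)
    have h2 : Ks' s β ⊆ Aux.ocube (c s β) (lam s * ρ s) := by
      rw [hKs']; exact Aux.cube_subset_ocube (hr'r _)
    exact ((hdisjO s) hα hβ hne).mono h1 h2
  have hK'subK : ∀ s α, Ks' s α ⊆ Ks s α := by
    intro s α; rw [hKs, hKs']; exact Aux.cube_subset_cube (hr'r s).le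
  have hK'subΩ : ∀ s, ∀ α ∈ A s, Ks' s α ⊆ Ω := fun s α hα => (hK'subK s α).trans (hsub s α hα)
  have hK'meas : ∀ s α, MeasurableSet (Ks' s α) := by
    intro s α; rw [hKs']; exact Aux.measurableSet_cube _ _
  have hKmeas : ∀ s α, MeasurableSet (Ks s α) := by
    intro s α; rw [hKs]; exact Aux.measurableSet_cube _ _
  have hqsmeas : ∀ s, Measurable (q s) := fun s => (hqdiff s).continuous.measurable
  have hq₀int : IntegrableOn q₀ Ω volume :=
    Aux.integrableOn_of_abs_rpow hm1 hΩfin (hq₀meas.aestronglyMeasurable.restrict) hq₀m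
  have hqsint : ∀ s, IntegrableOn (q s) Ω volume := fun s =>
    Aux.integrableOn_of_abs_rpow hm1 hΩfin ((hqsmeas s).aestronglyMeasurable.restrict) (hqm s)
  have htwo : (0:ℝ) ≤ 2 ^ m := Real.rpow_nonneg (by norm_num) m
  have hdiffint : ∀ s, IntegrableOn (fun x => |q s x - q₀ x| ^ m) Ω volume := by
    intro s
    refine Integrable.mono' (g := fun x => 2 ^ m * (|q s x| ^ m + |q₀ x| ^ m))
      (((hqm s).add hq₀m).const_mul _)
      (Aux.aesm_abs_rpow hm1 (((hqsmeas s).sub hq₀meas).aestronglyMeasurable.restrict))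
      (Filter.Eventually.of_forall fun x => ?_)
    rw [Real.norm_eq_abs, abs_of_nonneg (Real.rpow_nonneg (abs_nonneg _) m)]
    calc |q s x - q₀ x| ^ m = |q s x + -(q₀ x)| ^ m := by rw [sub_eq_add_neg]
      _ ≤ 2 ^ m * (|q s x| ^ m + |-(q₀ x)| ^ m) := Aux.abs_rpow_add_le hm0 _ _
      _ = 2 ^ m * (|q s x| ^ m + |q₀ x| ^ m) := by rw [abs_neg]
  -- measurability and integrability of |q' s - q₀|^m on Ω
  have hq'meas : ∀ s, Measurable (q' s) := by
    intro s
    have : q' s = fun x => ∑ α ∈ A s, Set.indicator (Ks' s α) (fun _ => qmean s α) x :=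
      funext (hq' s)
    rw [this]
    exact Finset.measurable_sum _ fun α _ => Measurable.indicator measurable_const (hK'meas s α)
  have hq'bdd : ∀ s x, |q' s x| ≤ ∑ α ∈ A s, |qmean s α| := by
    intro s x
    rw [hq' s x]
    refine le_trans (Finset.abs_sum_le_sum_abs _ _) (Finset.sum_le_sum fun α _ => ?_)
    classical
    rw [Set.indicator_apply]
    split_ifs
    · exact le_rfl
    · simp [abs_nonneg]
  have hC₀nn : ∀ s, (0:ℝ) ≤ ∑ α ∈ A s, |qmean s α| :=
    fun s => Finset.sum_nonneg fun α _ => abs_nonneg _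
  have hFint : ∀ s, IntegrableOn (fun x => |q' s x - q₀ x| ^ m) Ω volume := by
    intro s
    refine Integrable.mono'
      (g := fun x => 2 ^ m * ((∑ α ∈ A s, |qmean s α|) ^ m + |q₀ x| ^ m))
      (((integrableOn_const hΩfin.lt_top.ne).add hq₀m).const_mul _)
      (Aux.aesm_abs_rpow hm1 (((hq'meas s).sub hq₀meas).aestronglyMeasurable.restrict))
      (Filter.Eventually.of_forall fun x => ?_)
    rw [Real.norm_eq_abs, abs_of_nonneg (Real.rpow_nonneg (abs_nonneg _) m)]
    calc |q' s x - q₀ x| ^ m = |q' s x + -(q₀ x)| ^ m := by rw [sub_eq_add_neg]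
      _ ≤ 2 ^ m * (|q' s x| ^ m + |-(q₀ x)| ^ m) := Aux.abs_rpow_add_le hm0 _ _
      _ ≤ 2 ^ m * ((∑ α ∈ A s, |qmean s α|) ^ m + |q₀ x| ^ m) := by
          rw [abs_neg]
          refine mul_le_mul_of_nonneg_left (add_le_add ?_ le_rfl) htwo
          exact Real.rpow_le_rpow (abs_nonneg _) (hq'bdd s x) hm0
  -- decomposition of the integral
  set Es : ℕ → Set (En n) := fun s => Ω \ ⋃ α ∈ A s, Ks' s α with hEs_def
  have hUmeas : ∀ s, MeasurableSet (⋃ α ∈ A s, Ks' s α) :=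
    fun s => (A s).measurableSet_biUnion fun α _ => hK'meas s α
  have hEsmeas : ∀ s, MeasurableSet (Es s) := fun s => hΩm.diff (hUmeas s)
  have hUsubΩ : ∀ s, (⋃ α ∈ A s, Ks' s α) ⊆ Ω :=
    fun s => Set.iUnion₂_subset fun α hα => hK'subΩ s α hα
  have hq'Es : ∀ s, ∀ x ∈ Es s, q' s x = 0 := by
    intro s x hx
    rw [hq' s x]
    refine Finset.sum_eq_zero fun α hα => ?_
    refine Set.indicator_of_notMem (fun hxK => ?_) _
    exact hx.2 (Set.mem_biUnion hα hxK)
  have hq'K' : ∀ s, ∀ α ∈ A s, ∀ x ∈ Ks' s α, q' s x = qmean s α := by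
    intro s α hα x hx
    rw [hq' s x]
    rw [Finset.sum_eq_single_of_mem α hα]
    · exact Set.indicator_of_mem hx _
    · intro β hβ hne
      refine Set.indicator_of_notMem (fun hxK => ?_) _
      exact Set.disjoint_left.mp (hdisjK' s hβ hα hne) hxK hx
  have hT_eq : ∀ s, (∫ x in Ω, |q' s x - q₀ x| ^ m) =
      (∫ x in Es s, |q₀ x| ^ m) +
        ∑ α ∈ A s, ∫ x in Ks' s α, |qmean s α - q₀ x| ^ m := by
    intro s
    have hsplit : (∫ x in Ω, |q' s x - q₀ x| ^ m) =
        (∫ x in Es s, |q' s x - q₀ x| ^ m) +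
          ∫ x in ⋃ α ∈ A s, Ks' s α, |q' s x - q₀ x| ^ m := by
      rw [← setIntegral_union Set.disjoint_sdiff_left (hUmeas s)
        ((hFint s).mono_set Set.diff_subset)
        ((hFint s).mono_set (hUsubΩ s)), Set.diff_union_of_subset (hUsubΩ s)]
    rw [hsplit]
    congr 1
    · refine setIntegral_congr_fun (hEsmeas s) fun x hx => ?_
      rw [hq'Es s x hx, zero_sub, abs_neg]
    · rw [integral_biUnion_finset (A s) (fun α _ => hK'meas s α) (hdisjK' s)
        (fun α hα => (hFint s).mono_set (hK'subΩ s α hα))]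
      refine Finset.sum_congr rfl fun α hα => ?_
      refine setIntegral_congr_fun (hK'meas s α) fun x hx => ?_
      rw [hq'K' s α hα x hx]
  -- term A tends to zero
  have hvolEs : Tendsto (fun s => volume (Es s)) atTop (𝓝 0) := by
    have hsub2 : ∀ s, Es s ⊆ (Ω \ ⋃ α ∈ A s, Ks s α) ∪ ⋃ α ∈ A s, Ks s α \ Ks' s α := by
      intro s x hx
      by_cases hxK : x ∈ ⋃ α ∈ A s, Ks s α
      · obtain ⟨α, hα, hxα⟩ := Set.mem_iUnion₂.mp hxK
        refine Or.inr (Set.mem_biUnion hα ⟨hxα, fun hx' => ?_⟩)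
        exact hx.2 (Set.mem_biUnion hα hx')
      · exact Or.inl ⟨hx.1, hxK⟩
    have hfin1 : ∀ s, volume (Ω \ ⋃ α ∈ A s, Ks s α) ≠ ⊤ :=
      fun s => (lt_of_le_of_lt (measure_mono Set.diff_subset) hΩfin.lt_top).ne
    have hfin2 : ∀ s, volume (⋃ α ∈ A s, Ks s α \ Ks' s α) ≠ ⊤ := by
      intro s
      refine (lt_of_le_of_lt (measure_mono ?_) hΩfin.lt_top).ne
      exact Set.iUnion₂_subset fun α hα => (Set.diff_subset).trans (hsub s α hα)
    have h1 : Tendsto (fun s => volume (Ω \ ⋃ α ∈ A s, Ks s α)) atTop (𝓝 0) := by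
      have := ENNReal.tendsto_ofReal (a := 0) hUs
      rw [ENNReal.ofReal_zero] at this
      refine this.congr fun s => ?_
      rw [ENNReal.ofReal_toReal (hfin1 s)]
    have h2 : Tendsto (fun s => volume (⋃ α ∈ A s, Ks s α \ Ks' s α)) atTop (𝓝 0) := by
      have := ENNReal.tendsto_ofReal (a := 0) hann
      rw [ENNReal.ofReal_zero] at this
      refine this.congr fun s => ?_
      rw [ENNReal.ofReal_toReal (hfin2 s)]
    have hsum := h1.add h2
    rw [add_zero] at hsum
    refine tendsto_of_tendsto_of_tendsto_of_le_of_le tendsto_const_nhds hsum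
      (fun s => zero_le) (fun s => ?_)
    exact le_trans (measure_mono (hsub2 s)) (measure_union_le _ _)
  have hA0 : Tendsto (fun s => ∫ x in Es s, |q₀ x| ^ m) atTop (𝓝 0) := by
    have hind : Integrable (Ω.indicator fun x => |q₀ x| ^ m) volume :=
      (integrable_indicator_iff hΩm).2 hq₀m
    have heq : ∀ s, (∫ x in Es s, |q₀ x| ^ m) =
        ∫ x in Es s, Ω.indicator (fun x => |q₀ x| ^ m) x := by
      intro s
      refine setIntegral_congr_fun (hEsmeas s) fun x hx => ?_
      rw [Set.indicator_of_mem hx.1]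
    refine Tendsto.congr (fun s => (heq s).symm) ?_
    exact hind.tendsto_setIntegral_nhds_zero hvolEs
  -- term over inner cubes
  set P : ℕ → ℝ := fun s => (2 * lam s * ρ s) ^ n with hP_def
  have hP2r : ∀ s, P s = (2 * (lam s * ρ s)) ^ n := by intro s; rw [hP_def]; ring_nf
  have hPpos : ∀ s, 0 < P s := by
    intro s; rw [hP2r]; exact pow_pos (by nlinarith [hr s]) n
  have hvolKs : ∀ s α, (volume (Ks s α)).toReal = P s := by
    intro s α
    rw [hKs, Aux.volume_cube _ _ (hr s).le,
      ENNReal.toReal_ofReal (pow_nonneg (by nlinarith [hr s]) n), hP2r]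
  have hJ2 : Tendsto (fun s => ∑ α ∈ A s, ∫ x in Ks' s α,
      |(P s)⁻¹ * (∫ y in Ks s α, q₀ y) - q₀ x| ^ m) atTop (𝓝 0) := by
    have := Aux.tendsto_sum_avg hm1 hΩm hΩfin lam ρ hlam hρ hlr A c hsubC hdisjO
      hq₀meas hq₀m
    refine this.congr fun s => ?_
    refine Finset.sum_congr rfl fun α hα => ?_
    rw [hKs, hKs']
  -- the Jensen part for q_s - q₀
  have hJ1bound : ∀ s, ∑ α ∈ A s, (volume (Ks' s α)).toReal *
      |(P s)⁻¹ * ∫ y in Ks s α, (q s y - q₀ y)| ^ m ≤ ∫ x in Ω, |q s x - q₀ x| ^ m := by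
    intro s
    have hsumle : ∑ α ∈ A s, (∫ y in Ks s α, |q s y - q₀ y| ^ m) ≤
        ∫ x in Ω, |q s x - q₀ x| ^ m := by
      have heqO : ∀ α ∈ A s, (∫ y in Ks s α, |q s y - q₀ y| ^ m) =
          ∫ y in Aux.ocube (c s α) (lam s * ρ s), |q s y - q₀ y| ^ m := by
        intro α hα
        rw [hKs]
        exact setIntegral_congr_set (Aux.cube_ae_eq_ocube (hr s).le)
      rw [Finset.sum_congr rfl heqO]
      refine Aux.sum_setIntegral_le (fun x => Real.rpow_nonneg (abs_nonneg _) m)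
        (hdiffint s) (A s) _ (fun α _ => Aux.measurableSet_ocube _ _) (hdisjO s) ?_
      intro α hα
      exact (Aux.ocube_subset_cube).trans (hsubC s α hα)
    refine le_trans (Finset.sum_le_sum fun α hα => ?_) hsumle
    have hjen := Aux.jensen_avg (n := n) hm1 (hKmeas s α)
      (by rw [hKs, Aux.volume_cube _ _ (hr s).le]
          simp only [ne_eq, ENNReal.ofReal_eq_zero, not_le]
          exact pow_pos (by nlinarith [hr s]) n)
      (by rw [hKs, Aux.volume_cube _ _ (hr s).le]; exact ENNReal.ofReal_ne_top)
      (g := fun y => q s y - q₀ y)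
      (((hqsint s).mono_set (hsub s α hα)).sub (hq₀int.mono_set (hsub s α hα)))
      ((hdiffint s).mono_set (hsub s α hα))
    rw [hvolKs s α] at hjen
    have hvol' : (volume (Ks' s α)).toReal ≤ P s := by
      rw [hKs', Aux.volume_cube _ _ (hr'0 s),
        ENNReal.toReal_ofReal (pow_nonneg (by nlinarith [hr'0 s]) n), hP2r]
      exact pow_le_pow_left₀ (by linarith [hr'0 s]) (by nlinarith [hr'r s]) n
    calc (volume (Ks' s α)).toReal * |(P s)⁻¹ * ∫ y in Ks s α, (q s y - q₀ y)| ^ m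
        ≤ P s * |(P s)⁻¹ * ∫ y in Ks s α, (q s y - q₀ y)| ^ m :=
          mul_le_mul_of_nonneg_right hvol' (Real.rpow_nonneg (abs_nonneg _) m)
      _ ≤ P s * ((P s)⁻¹ * ∫ y in Ks s α, |q s y - q₀ y| ^ m) :=
          mul_le_mul_of_nonneg_left hjen (hPpos s).le
      _ = ∫ y in Ks s α, |q s y - q₀ y| ^ m := by
          rw [← mul_assoc, mul_inv_cancel₀ (ne_of_gt (hPpos s)), one_mul]
  -- per-s inequality
  have hT_le : ∀ s, (∫ x in Ω, |q' s x - q₀ x| ^ m) ≤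
      (∫ x in Es s, |q₀ x| ^ m) + 2 ^ m * (∫ x in Ω, |q s x - q₀ x| ^ m)
        + 2 ^ m * ∑ α ∈ A s, ∫ x in Ks' s α,
            |(P s)⁻¹ * (∫ y in Ks s α, q₀ y) - q₀ x| ^ m := by
    intro s
    rw [hT_eq s]
    have hper : ∀ α ∈ A s, (∫ x in Ks' s α, |qmean s α - q₀ x| ^ m) ≤
        2 ^ m * ((volume (Ks' s α)).toReal *
            |(P s)⁻¹ * ∫ y in Ks s α, (q s y - q₀ y)| ^ m)
          + 2 ^ m * ∫ x in Ks' s α, |(P s)⁻¹ * (∫ y in Ks s α, q₀ y) - q₀ x| ^ m := by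
      intro α hα
      have hd_eq : qmean s α - (P s)⁻¹ * (∫ y in Ks s α, q₀ y) =
          (P s)⁻¹ * ∫ y in Ks s α, (q s y - q₀ y) := by
        rw [hqmean s α hα, integral_sub ((hqsint s).mono_set (hsub s α hα))
          (hq₀int.mono_set (hsub s α hα))]
        ring
      have hvol'lt : volume (Ks' s α) < ⊤ :=
        lt_of_le_of_lt (measure_mono (hK'subΩ s α hα)) hΩfin.lt_top
      have hmidint : IntegrableOn
          (fun x => |(P s)⁻¹ * (∫ y in Ks s α, q₀ y) - q₀ x| ^ m) (Ks' s α) volume := by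
        refine Integrable.mono'
          (g := fun x => 2 ^ m * (|(P s)⁻¹ * (∫ y in Ks s α, q₀ y)| ^ m + |q₀ x| ^ m))
          (((integrableOn_const hvol'lt.ne).add
            (hq₀m.mono_set (hK'subΩ s α hα))).const_mul _)
          (Aux.aesm_abs_rpow hm1 ((measurable_const.sub hq₀meas).aestronglyMeasurable.restrict))
          (Filter.Eventually.of_forall fun x => ?_)
        rw [Real.norm_eq_abs, abs_of_nonneg (Real.rpow_nonneg (abs_nonneg _) m)]
        calc |(P s)⁻¹ * (∫ y in Ks s α, q₀ y) - q₀ x| ^ m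
            = |(P s)⁻¹ * (∫ y in Ks s α, q₀ y) + -(q₀ x)| ^ m := by rw [sub_eq_add_neg]
          _ ≤ 2 ^ m * (|(P s)⁻¹ * (∫ y in Ks s α, q₀ y)| ^ m + |-(q₀ x)| ^ m) :=
              Aux.abs_rpow_add_le hm0 _ _
          _ = 2 ^ m * (|(P s)⁻¹ * (∫ y in Ks s α, q₀ y)| ^ m + |q₀ x| ^ m) := by rw [abs_neg]
      have hRHSint : Integrable (fun x =>
          2 ^ m * (|(P s)⁻¹ * ∫ y in Ks s α, (q s y - q₀ y)| ^ m
            + |(P s)⁻¹ * (∫ y in Ks s α, q₀ y) - q₀ x| ^ m))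
          (volume.restrict (Ks' s α)) :=
        ((integrableOn_const hvol'lt.ne).add hmidint).const_mul _
      have hstep : (∫ x in Ks' s α, |qmean s α - q₀ x| ^ m) ≤
          ∫ x in Ks' s α, 2 ^ m * (|(P s)⁻¹ * ∫ y in Ks s α, (q s y - q₀ y)| ^ m
            + |(P s)⁻¹ * (∫ y in Ks s α, q₀ y) - q₀ x| ^ m) := by
        refine integral_mono_of_nonneg
          (Filter.Eventually.of_forall fun x => Real.rpow_nonneg (abs_nonneg _) m)
          hRHSint ?_
        refine Filter.Eventually.of_forall fun x => ?_
        dsimp only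
        have hid : qmean s α - q₀ x =
            ((P s)⁻¹ * ∫ y in Ks s α, (q s y - q₀ y)) +
              ((P s)⁻¹ * (∫ y in Ks s α, q₀ y) - q₀ x) := by
          rw [← hd_eq]; ring
        rw [hid]
        exact Aux.abs_rpow_add_le hm0 _ _
      refine le_trans hstep ?_
      rw [integral_const_mul]
      have hsplit2 : (∫ x in Ks' s α,
          (|(P s)⁻¹ * ∫ y in Ks s α, (q s y - q₀ y)| ^ m
            + |(P s)⁻¹ * (∫ y in Ks s α, q₀ y) - q₀ x| ^ m)) =
          (volume (Ks' s α)).toReal * |(P s)⁻¹ * ∫ y in Ks s α, (q s y - q₀ y)| ^ m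
            + ∫ x in Ks' s α, |(P s)⁻¹ * (∫ y in Ks s α, q₀ y) - q₀ x| ^ m := by
        rw [integral_add (integrableOn_const (C := |(P s)⁻¹ * ∫ y in Ks s α, (q s y - q₀ y)| ^ m) hvol'lt.ne) hmidint,
          setIntegral_const, measureReal_def, smul_eq_mul]
      rw [hsplit2, mul_add]
    calc (∫ x in Es s, |q₀ x| ^ m) +
          ∑ α ∈ A s, ∫ x in Ks' s α, |qmean s α - q₀ x| ^ m
        ≤ (∫ x in Es s, |q₀ x| ^ m) +
          ∑ α ∈ A s, (2 ^ m * ((volume (Ks' s α)).toReal *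
              |(P s)⁻¹ * ∫ y in Ks s α, (q s y - q₀ y)| ^ m)
            + 2 ^ m * ∫ x in Ks' s α, |(P s)⁻¹ * (∫ y in Ks s α, q₀ y) - q₀ x| ^ m) := by
          exact add_le_add le_rfl (Finset.sum_le_sum hper)
      _ = (∫ x in Es s, |q₀ x| ^ m) +
          2 ^ m * (∑ α ∈ A s, (volume (Ks' s α)).toReal *
              |(P s)⁻¹ * ∫ y in Ks s α, (q s y - q₀ y)| ^ m)
            + 2 ^ m * ∑ α ∈ A s, ∫ x in Ks' s α,
                |(P s)⁻¹ * (∫ y in Ks s α, q₀ y) - q₀ x| ^ m := by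
          rw [Finset.sum_add_distrib, ← Finset.mul_sum, ← Finset.mul_sum]
          ring
      _ ≤ (∫ x in Es s, |q₀ x| ^ m) + 2 ^ m * (∫ x in Ω, |q s x - q₀ x| ^ m)
            + 2 ^ m * ∑ α ∈ A s, ∫ x in Ks' s α,
                |(P s)⁻¹ * (∫ y in Ks s α, q₀ y) - q₀ x| ^ m := by
          refine add_le_add (add_le_add le_rfl ?_) le_rfl
          exact mul_le_mul_of_nonneg_left (hJ1bound s) htwo
  -- conclude by squeezing
  have hRHS : Tendsto (fun s => (∫ x in Es s, |q₀ x| ^ m)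
      + 2 ^ m * (∫ x in Ω, |q s x - q₀ x| ^ m)
      + 2 ^ m * ∑ α ∈ A s, ∫ x in Ks' s α,
          |(P s)⁻¹ * (∫ y in Ks s α, q₀ y) - q₀ x| ^ m) atTop (𝓝 0) := by
    have h1 := hA0.add ((hqconv.const_mul ((2:ℝ) ^ m)).add (hJ2.const_mul ((2:ℝ) ^ m)))
    simp only [mul_zero, add_zero] at h1
    refine h1.congr fun s => by ring
  refine squeeze_zero (fun s => ?_) hT_le hRHS
  exact setIntegral_nonneg hΩm fun x _ => Real.rpow_nonneg (abs_nonneg _) m
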